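/- Let x, y be an independent pair, both ≠ s, with G \ {x} and G \ {y} connected, and fix for each of them the component data and paths π_x(s,C) (C ∈ C_x) and π_y(s,C') (C' ∈ C_y). If y does not lie on π_x(s,C) for any C ∈ C_x, and x does not lie on π_y(s,C') for any C' ∈ C_y, then G \ {x,y} is connected. -/

import Mathlib

/-- A rooted spanning tree of the graph `G`, given by a root and a parent function:
the root is a fixed point of `parent`, every vertex reaches the root by iterating
`parent`, and every (parent, child) pair is an edge of `G`. -/
structure RSTree {V : Type*} (G : SimpleGraph V) where
  root : V
  parent : V → V
  parent_root : parent root = root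
  reaches : ∀ v : V, ∃ n : ℕ, parent^[n] v = root
  adj : ∀ v : V, v ≠ root → G.Adj (parent v) v

namespace RSTree

variable {V : Type*} {G : SimpleGraph V}

/-- `u` is an ancestor of `v` in `T`, i.e. `u` lies on the tree path `π(root, v)`;
includes `u = v`. -/
def Anc (T : RSTree G) (u v : V) : Prop := ∃ n : ℕ, T.parent^[n] v = u

/-- The vertex set `V(T_x)` of the subtree of `T` rooted at `x`. -/
def sub (T : RSTree G) (x : V) : Set V := {v | T.Anc x v}

/-- `c` is a child of `v` in `T`. -/
def IsChild (T : RSTree G) (c v : V) : Prop := T.parent c = v ∧ c ≠ v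

/-- `V_x = V(T_x) \ {x}`. -/
def Vx (T : RSTree G) (x : V) : Set V := {v | T.Anc x v ∧ v ≠ x}

end RSTree

/-- `v` and `w` are connected by a walk of `G` all of whose vertices lie in `S`
(i.e. they lie in the same connected component of the induced subgraph `G[S]`). -/
def ReachableWithin {V : Type*} (G : SimpleGraph V) (S : Set V) (v w : V) : Prop :=
  ∃ p : G.Walk v w, ∀ u ∈ p.support, u ∈ S

/-- `C` is (the vertex set of) a connected component of the induced subgraph `G[S]`. -/
def IsCompOf {V : Type*} (G : SimpleGraph V) (S : Set V) (C : Set V) : Prop :=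
  ∃ v ∈ S, C = {w | ReachableWithin G S v w}

/-!
Every vertex `v ∉ {x, y}` is joined to the root `s` avoiding `x` and `y`. If `v` lies in neither
subtree `T_x` nor `T_y`, the tree path `π(v, s)` only visits ancestors of `v`, hence avoids both.
If `v ∈ V_x`, walk inside the component `C` of `G[V_x]` containing `v` to `v_C` (this avoids `y`
because `x` and `y` are independent), cross the edge to `u_C`, and follow `π(u_C, s)`, which
avoids `x` as `u_C ∉ V(T_x)` and avoids `y` by hypothesis; `v ∈ V_y` is symmetric.
-/

namespace ReachableWithin

variable {V : Type*} {G : SimpleGraph V} {S S' : Set V} {u v w : V}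

lemma refl (hv : v ∈ S) : ReachableWithin G S v v :=
  ⟨.nil, by simpa using hv⟩

lemma of_adj (h : G.Adj v w) (hv : v ∈ S) (hw : w ∈ S) : ReachableWithin G S v w :=
  ⟨h.toWalk, by simp [hv, hw]⟩

lemma mem_left (h : ReachableWithin G S v w) : v ∈ S :=
  let ⟨p, hp⟩ := h; hp v p.start_mem_support

lemma symm (h : ReachableWithin G S v w) : ReachableWithin G S w v :=
  let ⟨p, hp⟩ := h; ⟨p.reverse, fun a ha => hp a (by simpa using ha)⟩

lemma trans (h₁ : ReachableWithin G S u v) (h₂ : ReachableWithin G S v w) :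
    ReachableWithin G S u w := by
  obtain ⟨p, hp⟩ := h₁
  obtain ⟨q, hq⟩ := h₂
  refine ⟨p.append q, fun a ha => ?_⟩
  rcases p.mem_support_append_iff q |>.1 ha with ha | ha
  exacts [hp a ha, hq a ha]

lemma mono (h : ReachableWithin G S v w) (hS : S ⊆ S') : ReachableWithin G S' v w :=
  let ⟨p, hp⟩ := h; ⟨p, fun a ha => hS (hp a ha)⟩

lemma induce_reachable (h : ReachableWithin G S v w) (hv : v ∈ S) (hw : w ∈ S) :
    (G.induce S).Reachable ⟨v, hv⟩ ⟨w, hw⟩ :=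
  let ⟨p, hp⟩ := h; ⟨p.induce S hp⟩

end ReachableWithin

lemma SimpleGraph.connected_induce_of_forall_reachableWithin {V : Type*} {G : SimpleGraph V}
    {S : Set V} {r : V} (hr : r ∈ S) (h : ∀ v ∈ S, ReachableWithin G S r v) :
    (G.induce S).Connected :=
  (connected_iff_exists_forall_reachable _).2
    ⟨⟨r, hr⟩, fun ⟨v, hv⟩ => (h v hv).induce_reachable hr hv⟩

namespace RSTree

variable {V : Type*} {G : SimpleGraph V} (T : RSTree G)

lemma anc_refl (v : V) : T.Anc v v := ⟨0, rfl⟩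

lemma anc_of_anc_parent {u v : V} (h : T.Anc u (T.parent v)) : T.Anc u v :=
  let ⟨n, hn⟩ := h; ⟨n + 1, hn⟩

lemma reachableWithin_ancestors_root (v : V) :
    ReachableWithin G {u | T.Anc u v} v T.root := by
  obtain ⟨n, hn⟩ := T.reaches v
  induction n generalizing v with
  | zero => exact hn ▸ .refl (T.anc_refl v)
  | succ n ih =>
    by_cases hv : v = T.root
    · exact hv ▸ .refl (T.anc_refl v)
    · have hparent : ReachableWithin G {u | T.Anc u v} (T.parent v) T.root :=
        (ih (T.parent v) hn).mono fun u => T.anc_of_anc_parent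
      exact .trans (.of_adj (T.adj v hv).symm (T.anc_refl v)
        (T.anc_of_anc_parent (T.anc_refl _))) hparent

lemma reachableWithin_root_of_not_anc {S : Set V} {v : V}
    (hS : ∀ u, T.Anc u v → u ∈ S) : ReachableWithin G S v T.root :=
  (T.reachableWithin_ancestors_root v).mono hS

lemma reachableWithin_compl_pair_root_of_exit_edge {x y v w u : V} (hxy : ¬ T.Anc x y)
    (hvw : ReachableWithin G (T.Vx x) v w) (hwu : G.Adj w u) (hu : u ∉ T.sub x)
    (hyu : ¬ T.Anc y u) : ReachableWithin G ({x, y}ᶜ : Set V) v T.root := by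
  have hVx : T.Vx x ⊆ ({x, y}ᶜ : Set V) := by
    rintro a ⟨hxa, hax⟩ (rfl | rfl)
    exacts [hax rfl, hxy hxa]
  have hanc : ∀ a, T.Anc a u → a ∈ ({x, y}ᶜ : Set V) := by
    rintro a hau (rfl | rfl)
    exacts [hu hau, hyu hau]
  have hwu' : ReachableWithin G ({x, y}ᶜ : Set V) w u :=
    .of_adj hwu (hVx hvw.symm.mem_left) (hanc u (T.anc_refl u))
  exact (hvw.mono hVx).trans <| hwu'.trans <| T.reachableWithin_root_of_not_anc hanc

lemma reachableWithin_compl_pair_root_of_anc {x y v : V} (hxy : ¬ T.Anc x y)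
    (hxv : T.Anc x v) (hvx : v ≠ x) (uc vc : Set V → V)
    (hexit : ∀ C, IsCompOf G (T.Vx x) C → G.Adj (uc C) (vc C) ∧ vc C ∈ C ∧ uc C ∉ T.sub x)
    (havoid : ∀ C, IsCompOf G (T.Vx x) C → y ∉ ({w | T.Anc w (uc C)} ∪ {vc C} : Set V)) :
    ReachableWithin G ({x, y}ᶜ : Set V) v T.root := by
  set C : Set V := {w | ReachableWithin G (T.Vx x) v w}
  have hC : IsCompOf G (T.Vx x) C := ⟨v, ⟨hxv, hvx⟩, rfl⟩
  obtain ⟨hadj, hvC, hu⟩ := hexit C hC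
  exact T.reachableWithin_compl_pair_root_of_exit_edge hxy hvC hadj.symm hu
    fun h => havoid C hC (.inl h)

end RSTree

theorem stmt8_general {V : Type*} (G : SimpleGraph V)
    (T : RSTree G) (x y : V)
    (hxs : x ≠ T.root) (hys : y ≠ T.root)
    (hind₁ : ¬ T.Anc x y) (hind₂ : ¬ T.Anc y x)
    (ucx vcx : Set V → V)
    (hux : ∀ C, IsCompOf G (T.Vx x) C →
      G.Adj (ucx C) (vcx C) ∧ vcx C ∈ C ∧ ucx C ∉ T.sub x)
    (ucy vcy : Set V → V)
    (huy : ∀ C, IsCompOf G (T.Vx y) C →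
      G.Adj (ucy C) (vcy C) ∧ vcy C ∈ C ∧ ucy C ∉ T.sub y)
    (hnx : ∀ C, IsCompOf G (T.Vx x) C →
      y ∉ ({w | T.Anc w (ucx C)} ∪ {vcx C} : Set V))
    (hny : ∀ C, IsCompOf G (T.Vx y) C →
      x ∉ ({w | T.Anc w (ucy C)} ∪ {vcy C} : Set V)) :
    (G.induce (({x, y} : Set V)ᶜ)).Connected := by
  refine SimpleGraph.connected_induce_of_forall_reachableWithin (r := T.root)
    (by simp [hxs.symm, hys.symm]) fun v hv => ReachableWithin.symm ?_
  obtain ⟨hvx, hvy⟩ : v ≠ x ∧ v ≠ y := by simpa [not_or] using hv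
  by_cases hxv : T.Anc x v
  · exact T.reachableWithin_compl_pair_root_of_anc hind₁ hxv hvx ucx vcx hux hnx
  by_cases hyv : T.Anc y v
  · rw [Set.pair_comm]
    exact T.reachableWithin_compl_pair_root_of_anc hind₂ hyv hvy ucy vcy huy hny
  refine T.reachableWithin_root_of_not_anc ?_
  rintro u huv (rfl | rfl)
  exacts [hxv huv, hyv huv]

/-- Let `x, y` be an independent pair (neither an ancestor of the
other in `T`), both different from the root `s`, with `G \ {x}` and `G \ {y}`
connected. Fix for each component `C` of `G[V_x]` an edge `(u_C, v_C)` of `G` with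
`v_C ∈ C` and `u_C ∉ V(T_x)` (so that `π_x(s,C) = π(s,u_C) ∘ (u_C, v_C)`), and
similarly for `y`. If `y` does not lie on `π_x(s,C)` for any component `C` of
`G[V_x]`, and `x` does not lie on `π_y(s,C')` for any component `C'` of `G[V_y]`,
then `G \ {x,y}` is connected. -/
theorem stmt8 {V : Type*} [Fintype V] (G : SimpleGraph V) (hG : G.Connected)
    (T : RSTree G) (x y : V)
    (hxs : x ≠ T.root) (hys : y ≠ T.root)
    (hind₁ : ¬ T.Anc x y) (hind₂ : ¬ T.Anc y x)
    (hx : (G.induce (({x} : Set V)ᶜ)).Connected)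
    (hy : (G.induce (({y} : Set V)ᶜ)).Connected)
    (ucx vcx : Set V → V)
    (hux : ∀ C, IsCompOf G (T.Vx x) C →
      G.Adj (ucx C) (vcx C) ∧ vcx C ∈ C ∧ ucx C ∉ T.sub x)
    (ucy vcy : Set V → V)
    (huy : ∀ C, IsCompOf G (T.Vx y) C →
      G.Adj (ucy C) (vcy C) ∧ vcy C ∈ C ∧ ucy C ∉ T.sub y)
    (hnx : ∀ C, IsCompOf G (T.Vx x) C →
      y ∉ ({w | T.Anc w (ucx C)} ∪ {vcx C} : Set V))
    (hny : ∀ C, IsCompOf G (T.Vx y) C →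
      x ∉ ({w | T.Anc w (ucy C)} ∪ {vcy C} : Set V)) :
    (G.induce (({x, y} : Set V)ᶜ)).Connected :=
  stmt8_general G T x y hxs hys hind₁ hind₂ ucx vcx hux ucy vcy huy hnx hny
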